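/- With λⱼ(ρ) as the roots of λ³ + iρ³ = 0 (λ₁ = iρ, λ₂ = ((√3-i)/2)ρ, λ₃ = -((√3+i)/2)ρ), the ratio Δ¹₁,₃(ρ)/Δ¹(ρ) := (e^{λ₃} - e^{λ₂}) / [(λ₃-λ₂)e^{-λ₁} + (λ₁-λ₃)e^{-λ₂} + (λ₂-λ₁)e^{-λ₃}] satisfies: there exist C > 0 and ρ₀ > 0 such that |Δ¹₁,₃(ρ)/Δ¹(ρ)| ≤ C ρ^{-1} for all ρ ≥ ρ₀. -/

import Mathlib

noncomputable def lam1 (ρ : ℝ) : ℂ := Complex.I * ρ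
noncomputable def lam2 (ρ : ℝ) : ℂ := ((Real.sqrt 3 : ℂ) - Complex.I) / 2 * ρ
noncomputable def lam3 (ρ : ℝ) : ℂ := -(((Real.sqrt 3 : ℂ) + Complex.I) / 2 * ρ)

noncomputable def Delta1 (ρ : ℝ) : ℂ :=
  (lam3 ρ - lam2 ρ) * Complex.exp (-lam1 ρ) +
  (lam1 ρ - lam3 ρ) * Complex.exp (-lam2 ρ) +
  (lam2 ρ - lam1 ρ) * Complex.exp (-lam3 ρ)

/-!
Put `a = (√3/2) ρ`. Since `Re λ₁ = 0` and `Re λ₂ = -Re λ₃ = a`, the numerator is at most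
`e^{-a} + e^a ≤ 2 e^a`. The roots `λⱼ` are the vertices of an equilateral triangle inscribed
in the circle of radius `ρ`, so every difference `λᵢ - λⱼ` has modulus `√3 ρ`; hence in `Δ¹`
the term `(λ₂ - λ₁) e^{-λ₃}` of modulus `√3 ρ e^a` dominates the other two, of moduli `√3 ρ`
and `√3 ρ e^{-a}`, and `|Δ¹| ≥ √3 ρ e^a / 2` once `e^a ≥ 4`. The ratio is then at most
`4 / (√3 ρ)`.
-/

open Complex

lemma norm_sub_norm_sub_norm_le_norm_add_add {E : Type*} [SeminormedAddCommGroup E]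
    (a b c : E) : ‖c‖ - ‖a‖ - ‖b‖ ≤ ‖a + b + c‖ := by
  have h := norm_sub_le_norm_add c (a + b)
  rw [add_comm c] at h
  linarith [norm_add_le a b]

lemma norm_eq_sqrt_three_mul_of_normSq_eq {z : ℂ} {ρ : ℝ} (h : normSq z = 3 * ρ ^ 2)
    (hρ : 0 ≤ ρ) : ‖z‖ = √3 * ρ := by
  rw [norm_def, h, Real.sqrt_mul zero_le_three, Real.sqrt_sq hρ]

section Roots

variable (ρ : ℝ)

@[simp] lemma lam1_re : (lam1 ρ).re = 0 := by simp [lam1]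

@[simp] lemma lam2_re : (lam2 ρ).re = √3 / 2 * ρ := by simp [lam2]

@[simp] lemma lam3_re : (lam3 ρ).re = -(√3 / 2 * ρ) := by simp [lam3]

lemma normSq_lam3_sub_lam2 : normSq (lam3 ρ - lam2 ρ) = 3 * ρ ^ 2 := by
  simp [normSq_apply, lam2, lam3]; ring_nf; simp; ring

lemma normSq_lam1_sub_lam3 : normSq (lam1 ρ - lam3 ρ) = 3 * ρ ^ 2 := by
  simp [normSq_apply, lam1, lam3]; ring_nf; simp; ring

lemma normSq_lam2_sub_lam1 : normSq (lam2 ρ - lam1 ρ) = 3 * ρ ^ 2 := by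
  simp [normSq_apply, lam1, lam2]; ring_nf; simp; ring

lemma norm_exp_lam3_sub_exp_lam2_le (hρ : 0 ≤ ρ) :
    ‖exp (lam3 ρ) - exp (lam2 ρ)‖ ≤ 2 * Real.exp (√3 / 2 * ρ) := by
  have hdecay : Real.exp (-(√3 / 2 * ρ)) ≤ Real.exp (√3 / 2 * ρ) :=
    Real.exp_le_exp.mpr (by linarith [show 0 ≤ √3 / 2 * ρ by positivity])
  calc ‖exp (lam3 ρ) - exp (lam2 ρ)‖ ≤ ‖exp (lam3 ρ)‖ + ‖exp (lam2 ρ)‖ := norm_sub_le _ _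
    _ = Real.exp (-(√3 / 2 * ρ)) + Real.exp (√3 / 2 * ρ) := by simp [norm_exp]
    _ ≤ 2 * Real.exp (√3 / 2 * ρ) := by linarith

lemma norm_Delta1_ge (hρ : 4 ≤ ρ) : √3 * ρ * Real.exp (√3 / 2 * ρ) / 2 ≤ ‖Delta1 ρ‖ := by
  have hρ0 : 0 ≤ ρ := by linarith
  have hsqrt : 3 / 2 ≤ √3 := Real.le_sqrt_of_sq_le (by norm_num)
  have ha : 3 ≤ √3 / 2 * ρ := by nlinarith
  set a := √3 / 2 * ρ
  have hexp : 4 ≤ Real.exp a := by linarith [Real.add_one_le_exp a]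
  have hexp_neg : Real.exp (-a) ≤ 1 := Real.exp_le_one_iff.mpr (by linarith)
  have h32 := norm_eq_sqrt_three_mul_of_normSq_eq (normSq_lam3_sub_lam2 ρ) hρ0
  have h13 := norm_eq_sqrt_three_mul_of_normSq_eq (normSq_lam1_sub_lam3 ρ) hρ0
  have h21 := norm_eq_sqrt_three_mul_of_normSq_eq (normSq_lam2_sub_lam1 ρ) hρ0
  have hdom := norm_sub_norm_sub_norm_le_norm_add_add
    ((lam3 ρ - lam2 ρ) * exp (-lam1 ρ)) ((lam1 ρ - lam3 ρ) * exp (-lam2 ρ))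
    ((lam2 ρ - lam1 ρ) * exp (-lam3 ρ))
  simp only [norm_mul, norm_exp, neg_re, lam1_re, lam2_re, lam3_re, neg_zero, Real.exp_zero,
    neg_neg, h32, h13, h21] at hdom
  rw [Delta1]
  nlinarith [show 0 ≤ √3 * ρ by positivity]

end Roots

/-- The ratio Δ¹₁,₃(ρ)/Δ¹(ρ) decays like ρ⁻¹ as ρ → ∞. -/
theorem stmt6 :
    ∃ C > (0 : ℝ), ∃ ρ₀ > (0 : ℝ), ∀ ρ ≥ ρ₀,
      ‖(Complex.exp (lam3 ρ) - Complex.exp (lam2 ρ)) / Delta1 ρ‖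
        ≤ C * ρ⁻¹ := by
  refine ⟨4 / √3, by positivity, 4, by norm_num, fun ρ hρ => ?_⟩
  have hρ0 : 0 < ρ := by linarith
  have hden_pos : 0 < √3 * ρ * Real.exp (√3 / 2 * ρ) / 2 := by positivity
  calc ‖(exp (lam3 ρ) - exp (lam2 ρ)) / Delta1 ρ‖
      ≤ 2 * Real.exp (√3 / 2 * ρ) / (√3 * ρ * Real.exp (√3 / 2 * ρ) / 2) := by
        rw [norm_div]
        exact div_le_div₀ (by positivity) (norm_exp_lam3_sub_exp_lam2_le ρ hρ0.le) hden_pos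
          (norm_Delta1_ge ρ hρ)
    _ = 4 / √3 * ρ⁻¹ := by field_simp; ring
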